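/- arXiv:1204.6448 — 2 statements merged into one kernel-verified Lean document; each statement's English description precedes it below -/
import Mathlib

section
/- For σ > 0, the tension spline function G(x) = −(1/(2σ³)) (exp(−σ|x|) + σ|x|) on ℝ satisfies G'''' − σ² G'' = δ_0 in the sense of tempered distributions; that is, for every Schwartz function γ : ℝ → ℝ, ∫_ℝ G(x) (γ''''(x) − σ² γ''(x)) dx = γ(0). -/
/-!
On `(0, ∞)` the kernel is `G = -(exp (-σ x) + σ x) / (2σ³)`, and two integrations by parts
against a Schwartz function (Green's identity for `d²/dx²`) move `L = d⁴/dx⁴ - σ² d²/dx²` onto `G`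
up to boundary terms at `0`. Since `G'' - σ² G` is linear there, one more application of Green's
identity gives `∫_{x > 0} G · Lγ = γ 0 / 2 + γ''' 0 / (2σ³)`. The reflection `x ↦ -x` fixes `G` and
flips the sign of `γ'''`, so the two half-lines add up to `γ 0`. Growth at infinity is handled by
comparing with the Schwartz function `(1 + x²) γ`.
-/

open MeasureTheory Filter Set Topology Asymptotics
open scoped SchwartzMap

namespace SchwartzMap

variable {u u' u'' : ℝ → ℝ}

@[simp]
theorem coe_derivCLM (f : 𝓢(ℝ, ℝ)) : ⇑(derivCLM ℝ ℝ f) = deriv f := rfl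

theorem isBigO_mul_smulLeftCLM_one_add_sq (f : 𝓢(ℝ, ℝ)) {l : Filter ℝ}
    (hu : u =O[l] fun x => 1 + x ^ 2) :
    (fun x => u x * f x) =O[l] smulLeftCLM ℝ (fun x : ℝ => 1 + x ^ 2) f := by
  have hw : (fun x : ℝ => 1 + x ^ 2).HasTemperateGrowth := by fun_prop
  refine (hu.mul (isBigO_refl f l)).congr_right fun x => ?_
  simp [smulLeftCLM_apply_apply hw]

theorem integrableOn_mul_of_isBigO (f : 𝓢(ℝ, ℝ)) {s : Set ℝ} (hs : MeasurableSet s)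
    (hu : Continuous u) (hO : u =O[𝓟 s] fun x => 1 + x ^ 2) :
    IntegrableOn (fun x => u x * f x) s := by
  obtain ⟨C, hC⟩ := (isBigO_mul_smulLeftCLM_one_add_sq f hO).bound
  refine ((smulLeftCLM ℝ (fun x : ℝ => 1 + x ^ 2) f).integrable.norm.const_mul C).integrableOn
    |>.mono' (hu.mul f.continuous).aestronglyMeasurable.restrict (ae_restrict_of_forall_mem hs ?_)
  exact eventually_principal.mp hC

theorem tendsto_mul_of_isBigO (f : 𝓢(ℝ, ℝ)) {l : Filter ℝ} (hl : l ≤ cocompact ℝ)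
    (hO : u =O[l] fun x => 1 + x ^ 2) : Tendsto (fun x => u x * f x) l (𝓝 0) :=
  (isBigO_mul_smulLeftCLM_one_add_sq f hO).trans_tendsto ((tendsto_cocompact _).mono_left hl)

theorem integral_Ioi_mul_deriv (hu : ∀ x, HasDerivAt u (u' x) x) (hu' : Continuous u')
    (hOu : u =O[𝓟 (Ioi 0)] fun x => 1 + x ^ 2) (hOu' : u' =O[𝓟 (Ioi 0)] fun x => 1 + x ^ 2)
    (f : 𝓢(ℝ, ℝ)) :
    ∫ x in Ioi 0, u x * deriv f x = -(u 0 * f 0) - ∫ x in Ioi 0, u' x * f x := by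
  have hcont : Continuous u := continuous_iff_continuousAt.2 fun x => (hu x).continuousAt
  have h_zero : Tendsto (fun x => u x * f x) (𝓝[>] 0) (𝓝 (u 0 * f 0)) :=
    ((hcont.mul f.continuous).tendsto 0).mono_left nhdsWithin_le_nhds
  have h_top : Tendsto (fun x => u x * f x) atTop (𝓝 0) :=
    tendsto_mul_of_isBigO f atTop_le_cocompact (hOu.mono (le_principal_iff.2 (Ioi_mem_atTop 0)))
  simpa using integral_Ioi_mul_deriv_eq_deriv_mul (fun x _ => hu x) (fun x _ => f.hasDerivAt x)
    (integrableOn_mul_of_isBigO (derivCLM ℝ ℝ f) measurableSet_Ioi hcont hOu)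
    (integrableOn_mul_of_isBigO f measurableSet_Ioi hu' hOu') h_zero h_top

theorem integral_Ioi_mul_deriv_deriv (hu : ∀ x, HasDerivAt u (u' x) x)
    (hu' : ∀ x, HasDerivAt u' (u'' x) x) (hu'' : Continuous u'')
    (hOu : u =O[𝓟 (Ioi 0)] fun x => 1 + x ^ 2) (hOu' : u' =O[𝓟 (Ioi 0)] fun x => 1 + x ^ 2)
    (hOu'' : u'' =O[𝓟 (Ioi 0)] fun x => 1 + x ^ 2) (f : 𝓢(ℝ, ℝ)) :
    ∫ x in Ioi 0, u x * deriv (deriv f) x =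
      u' 0 * f 0 - u 0 * deriv f 0 + ∫ x in Ioi 0, u'' x * f x := by
  have hcont' : Continuous u' := continuous_iff_continuousAt.2 fun x => (hu' x).continuousAt
  rw [show deriv (deriv ⇑f) = deriv (derivCLM ℝ ℝ f) from rfl,
    integral_Ioi_mul_deriv hu hcont' hOu hOu']
  simp only [derivCLM_apply]
  rw [integral_Ioi_mul_deriv hu' hu'' hOu' hOu'']
  ring

end SchwartzMap

theorem isBigO_const_one_add_sq (c : ℝ) (l : Filter ℝ) :
    (fun _ => c) =O[l] fun x : ℝ => 1 + x ^ 2 :=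
  IsBigO.of_bound |c| <| Eventually.of_forall fun x => by
    simp only [Real.norm_eq_abs]
    rw [abs_of_pos (by positivity : (0:ℝ) < 1 + x ^ 2)]
    nlinarith [abs_nonneg c, sq_nonneg x]

theorem isBigO_id_one_add_sq (l : Filter ℝ) : (fun x => x) =O[l] fun x : ℝ => 1 + x ^ 2 :=
  IsBigO.of_bound 1 <| Eventually.of_forall fun x => by
    simp only [Real.norm_eq_abs]
    rw [abs_of_pos (by positivity : (0:ℝ) < 1 + x ^ 2)]
    nlinarith [sq_abs x, sq_nonneg (|x| - 1)]

theorem isBigO_exp_neg_mul_one_add_sq {σ : ℝ} (hσ : 0 ≤ σ) :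
    (fun x => Real.exp (-σ * x)) =O[𝓟 (Ioi 0)] fun x : ℝ => 1 + x ^ 2 :=
  (IsBigO.of_bound 1 <| eventually_principal.2 fun x hx => by
    simp only [Real.norm_eq_abs, Real.abs_exp, norm_one, one_mul]
    exact Real.exp_le_one_iff.2 (by nlinarith [mem_Ioi.1 hx])).trans
    (isBigO_const_one_add_sq 1 _)

theorem hasDerivAt_exp_neg_mul (σ x : ℝ) :
    HasDerivAt (fun x => Real.exp (-σ * x)) (-σ * Real.exp (-σ * x)) x := by
  simpa [mul_comm] using ((hasDerivAt_id' x).const_mul (-σ)).exp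

theorem iterate_deriv_comp_neg {𝕜 F : Type*} [NontriviallyNormedField 𝕜] [NormedAddCommGroup F]
    [NormedSpace 𝕜 F] (n : ℕ) (f : 𝕜 → F) (a : 𝕜) :
    deriv^[n] (fun x => f (-x)) a = (-1 : 𝕜) ^ n • deriv^[n] f (-a) := by
  simpa [iteratedDeriv_eq_iterate] using iteratedDeriv_comp_neg n f a

open SchwartzMap in
theorem integral_Ioi_exp_neg_mul_add_mul_mul {σ : ℝ} (hσ : 0 ≤ σ) (f : 𝓢(ℝ, ℝ)) :
    ∫ x in Ioi 0, (Real.exp (-σ * x) + σ * x) * (deriv^[4] f x - σ ^ 2 * deriv (deriv f) x) =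
      -deriv^[3] f 0 - σ ^ 3 * f 0 := by
  set f₂ := derivCLM ℝ ℝ (derivCLM ℝ ℝ f)
  have hE := isBigO_exp_neg_mul_one_add_sq hσ
  have hp (x : ℝ) : HasDerivAt (fun x => Real.exp (-σ * x) + σ * x)
      (-σ * Real.exp (-σ * x) + σ) x :=
    ((hasDerivAt_exp_neg_mul σ x).add ((hasDerivAt_id' x).const_mul σ)).congr_deriv (by ring)
  have hp' (x : ℝ) : HasDerivAt (fun x => -σ * Real.exp (-σ * x) + σ)
      (σ ^ 2 * Real.exp (-σ * x)) x :=
    (((hasDerivAt_exp_neg_mul σ x).const_mul (-σ)).add_const σ).congr_deriv (by ring)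
  have hOp := hE.add ((isBigO_id_one_add_sq _).const_mul_left σ)
  have hOe := hE.const_mul_left (σ ^ 2)
  have green_p := integral_Ioi_mul_deriv_deriv hp hp' (by fun_prop) hOp
    ((hE.const_mul_left (-σ)).add (isBigO_const_one_add_sq σ _)) hOe f₂
  have green_id := integral_Ioi_mul_deriv_deriv (fun x => hasDerivAt_id' x)
    (fun x => hasDerivAt_const x 1) continuous_const (isBigO_id_one_add_sq _)
    (isBigO_const_one_add_sq 1 _) (isBigO_const_one_add_sq 0 _) f
  have hint₁ : IntegrableOn
      (fun x => (Real.exp (-σ * x) + σ * x) * deriv (deriv f₂) x) (Ioi 0) :=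
    integrableOn_mul_of_isBigO (derivCLM ℝ ℝ (derivCLM ℝ ℝ f₂)) measurableSet_Ioi
      (by fun_prop) hOp
  have hint₂ := integrableOn_mul_of_isBigO f₂ measurableSet_Ioi (by fun_prop) hOe
  have hint₃ : IntegrableOn (fun x => x * deriv (deriv f) x) (Ioi 0) :=
    integrableOn_mul_of_isBigO f₂ measurableSet_Ioi continuous_id' (isBigO_id_one_add_sq _)
  have hint₁₂ : IntegrableOn (fun x => (Real.exp (-σ * x) + σ * x) * deriv (deriv f₂) x -
      σ ^ 2 * Real.exp (-σ * x) * f₂ x) (Ioi 0) := hint₁.sub hint₂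
  -- For `p x = exp (-σ x) + σ x`, `σ² p = p'' + σ³ x`: Green's identity for `p` leaves
  -- `-σ³ ∫ x f''`, which is `-σ³ f 0` by Green's identity for `x`.
  have hsplit (x : ℝ) :
      (Real.exp (-σ * x) + σ * x) * (deriv^[4] f x - σ ^ 2 * deriv (deriv f) x) =
        (Real.exp (-σ * x) + σ * x) * deriv (deriv f₂) x - σ ^ 2 * Real.exp (-σ * x) * f₂ x -
          σ ^ 3 * (x * deriv (deriv f) x) := by
    simp only [f₂, coe_derivCLM, Function.iterate_succ, Function.comp_apply, Function.iterate_zero,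
      id]
    ring
  simp_rw [hsplit]
  rw [integral_sub hint₁₂ (hint₃.const_mul _), integral_sub hint₁ hint₂, integral_const_mul,
    green_p, green_id]
  simp [f₂]

noncomputable def tensionSpline (σ x : ℝ) : ℝ :=
  -(1 / (2 * σ ^ 3)) * (Real.exp (-σ * |x|) + σ * |x|)

theorem tensionSpline_neg (σ x : ℝ) : tensionSpline σ (-x) = tensionSpline σ x := by
  simp [tensionSpline]

theorem continuous_tensionSpline (σ : ℝ) : Continuous (tensionSpline σ) := by
  unfold tensionSpline
  fun_prop

theorem isBigO_tensionSpline {σ : ℝ} (hσ : 0 ≤ σ) :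
    tensionSpline σ =O[⊤] fun x => 1 + x ^ 2 := by
  have hexp : (fun x => Real.exp (-σ * |x|)) =O[⊤] fun x : ℝ => 1 + x ^ 2 :=
    (IsBigO.of_bound 1 <| Eventually.of_forall fun x => by
      rw [norm_one, one_mul, Real.norm_eq_abs, Real.abs_exp]
      exact Real.exp_le_one_iff.2 (by nlinarith [abs_nonneg x])).trans
      (isBigO_const_one_add_sq 1 ⊤)
  have habs : (fun x => |x|) =O[⊤] fun x : ℝ => 1 + x ^ 2 :=
    (isBigO_id_one_add_sq ⊤).norm_left
  exact (hexp.add (habs.const_mul_left σ)).const_mul_left _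

open SchwartzMap in
theorem integrable_tensionSpline_mul {σ : ℝ} (hσ : 0 ≤ σ) (f : 𝓢(ℝ, ℝ)) :
    Integrable fun x => tensionSpline σ x * (deriv^[4] f x - σ ^ 2 * deriv (deriv f) x) :=
  integrableOn_univ.1 <| integrableOn_mul_of_isBigO
    (derivCLM ℝ ℝ (derivCLM ℝ ℝ (derivCLM ℝ ℝ (derivCLM ℝ ℝ f))) -
      σ ^ 2 • derivCLM ℝ ℝ (derivCLM ℝ ℝ f))
    MeasurableSet.univ (continuous_tensionSpline σ) (principal_univ ▸ isBigO_tensionSpline hσ)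

theorem integral_Ioi_tensionSpline_mul {σ : ℝ} (hσ : 0 < σ) (f : 𝓢(ℝ, ℝ)) :
    ∫ x in Ioi 0, tensionSpline σ x * (deriv^[4] f x - σ ^ 2 * deriv (deriv f) x) =
      f 0 / 2 + deriv^[3] f 0 / (2 * σ ^ 3) := by
  rw [setIntegral_congr_fun measurableSet_Ioi fun x hx => by
      rw [tensionSpline, abs_of_pos (mem_Ioi.1 hx), mul_assoc], integral_const_mul,
    integral_Ioi_exp_neg_mul_add_mul_mul hσ.le]
  field_simp
  ring

open SchwartzMap in
theorem integral_Iic_tensionSpline_mul {σ : ℝ} (hσ : 0 < σ) (f : 𝓢(ℝ, ℝ)) :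
    ∫ x in Iic 0, tensionSpline σ x * (deriv^[4] f x - σ ^ 2 * deriv (deriv f) x) =
      f 0 / 2 - deriv^[3] f 0 / (2 * σ ^ 3) := by
  set ρ := compCLMOfContinuousLinearEquiv ℝ (ContinuousLinearEquiv.neg ℝ) f
  have hρ (n : ℕ) (x : ℝ) : deriv^[n] ρ x = (-1) ^ n * deriv^[n] f (-x) :=
    iterate_deriv_comp_neg n f x
  have hρ₂ (x : ℝ) : deriv (deriv ρ) x = deriv (deriv f) (-x) := by
    simpa using hρ 2 x
  conv_lhs => rw [← neg_zero, ← integral_comp_neg_Ioi]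
  calc
    _ = ∫ x in Ioi 0, tensionSpline σ x * (deriv^[4] ρ x - σ ^ 2 * deriv (deriv ρ) x) := by
      congr 1
      ext x
      rw [tensionSpline_neg, hρ 4, hρ₂]
      ring
    _ = _ := by
      rw [integral_Ioi_tensionSpline_mul hσ, hρ 3]
      simp [ρ]
      ring

/-- For `σ > 0`, the tension spline function
`G(x) = −(1/(2σ³)) (exp(−σ|x|) + σ|x|)` on `ℝ` satisfies `G'''' − σ²G'' = δ₀`
in the sense of tempered distributions: for every Schwartz function `γ : ℝ → ℝ`,
`∫ G(x) (γ''''(x) − σ²γ''(x)) dx = γ(0)`. -/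
theorem tension_spline_green_function (σ : ℝ) (hσ : 0 < σ) (γ : SchwartzMap ℝ ℝ) :
    ∫ x : ℝ,
      (-(1 / (2 * σ ^ 3)) * (Real.exp (-σ * |x|) + σ * |x|)) *
        ((deriv^[4] (⇑γ)) x - σ ^ 2 * deriv (deriv (⇑γ)) x)
      = γ 0 := by
  change ∫ x, tensionSpline σ x * _ = _
  have hint := integrable_tensionSpline_mul hσ.le γ
  rw [← intervalIntegral.integral_Iic_add_Ioi hint.integrableOn hint.integrableOn,
    integral_Iic_tensionSpline_mul hσ, integral_Ioi_tensionSpline_mul hσ]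
  ring
end

section
/- Let l̂ : ℝ^d → ℝ be continuous, strictly positive on ℝ^d \ {0}, with l̂(x) = Θ(‖x‖₂^{2m}) as x → 0 for some m ∈ ℕ₀ and 1/l̂ slowly increasing at infinity. Then for every Schwartz function γ with γ(x) = O(‖x‖₂^{2m}) as x → 0, the function x ↦ l̂(x)^{−1} γ(x) is Lebesgue integrable on ℝ^d. -/
open MeasureTheory Filter

/-- Let `l̂ : ℝᵈ → ℝ` be continuous, strictly positive on `ℝᵈ \ {0}`, with
`l̂(x) = Θ(‖x‖^{2m})` as `x → 0` and `1/l̂` slowly increasing at infinity.  Then for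
every Schwartz function `γ` with `γ(x) = O(‖x‖^{2m})` as `x → 0`, the function
`x ↦ l̂(x)⁻¹ γ(x)` is Lebesgue integrable on `ℝᵈ`. -/
theorem reciprocal_symbol_times_schwartz_integrable
    (d m : ℕ)
    (lhat : EuclideanSpace ℝ (Fin d) → ℝ)
    (hcont : Continuous lhat)
    (hpos : ∀ x, x ≠ 0 → 0 < lhat x)
    -- `l̂(x) = Θ(‖x‖^{2m})` near the origin
    (hTheta : ∃ M₁ M₂ ε : ℝ, 0 < M₁ ∧ 0 < M₂ ∧ 0 < ε ∧
        ∀ x : EuclideanSpace ℝ (Fin d), ‖x‖ ≤ ε →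
          M₁ * ‖x‖ ^ (2 * m) ≤ lhat x ∧ lhat x ≤ M₂ * ‖x‖ ^ (2 * m))
    -- `1/l̂` slowly increasing at infinity
    (hslow : ∃ (C : ℝ) (k : ℕ) (R : ℝ), 0 < C ∧
        ∀ x : EuclideanSpace ℝ (Fin d), R ≤ ‖x‖ → (lhat x)⁻¹ ≤ C * ‖x‖ ^ k)
    (γ : SchwartzMap (EuclideanSpace ℝ (Fin d)) ℂ)
    -- `γ(x) = O(‖x‖^{2m})` as `x → 0`
    (hγ : ∃ M : ℝ, ∀ᶠ x in nhds (0 : EuclideanSpace ℝ (Fin d)),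
        ‖γ x‖ ≤ M * ‖x‖ ^ (2 * m)) :
    Integrable (fun x => (lhat x)⁻¹ • γ x)
      (volume : Measure (EuclideanSpace ℝ (Fin d))) := by
  obtain ⟨M₁, M₂, ε, hM₁, hM₂, hε, hθ⟩ := hTheta
  obtain ⟨C, k, R, hC, hR⟩ := hslow
  obtain ⟨M, hM⟩ := hγ
  rw [Metric.eventually_nhds_iff] at hM
  obtain ⟨δ, hδ, hMδ⟩ := hM
  set f : EuclideanSpace ℝ (Fin d) → ℂ := fun x => (lhat x)⁻¹ • γ x with hf
  have hmeas : AEStronglyMeasurable f volume :=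
    (hcont.measurable.inv.aemeasurable.aestronglyMeasurable).smul
      γ.continuous.aestronglyMeasurable
  -- norm formula for x ≠ 0
  have hnorm : ∀ x : EuclideanSpace ℝ (Fin d), x ≠ 0 → ‖f x‖ = (lhat x)⁻¹ * ‖γ x‖ := by
    intro x hx
    rw [hf, norm_smul, Real.norm_eq_abs, abs_of_pos (inv_pos.mpr (hpos x hx))]
  set ε' : ℝ := min ε (δ / 2) with hε'
  have hε'pos : 0 < ε' := lt_min hε (by linarith)
  set r₁ : ℝ := max R 1 with hr₁
  have hr₁pos : (0:ℝ) < r₁ := lt_of_lt_of_le one_pos (le_max_right _ _)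
  -- bound on the annulus
  set A : Set (EuclideanSpace ℝ (Fin d)) :=
    Metric.closedBall 0 r₁ \ Metric.ball 0 ε' with hA
  have hAcpt : IsCompact A := (isCompact_closedBall 0 r₁).diff Metric.isOpen_ball
  have hAcont : ContinuousOn (fun x => (lhat x)⁻¹ * ‖γ x‖) A := by
    apply ContinuousOn.mul
    · apply ContinuousOn.inv₀ hcont.continuousOn
      intro x hx
      refine (hpos x ?_).ne'
      intro h0
      have := hx.2
      simp [h0, Metric.mem_ball, hε'pos] at this
    · exact γ.continuous.norm.continuousOn
  obtain ⟨B₂, hB₂⟩ := (hAcpt.image_of_continuousOn hAcont).bddAbove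
  -- Integrable on closed ball
  have hball : IntegrableOn f (Metric.closedBall 0 r₁) volume := by
    apply Measure.integrableOn_of_bounded
      (M := max (max (M / M₁) ‖f 0‖) B₂)
      (measure_closedBall_lt_top).ne hmeas
    rw [ae_restrict_iff' measurableSet_closedBall]
    apply ae_of_all
    intro x hx
    simp only [Metric.mem_closedBall, dist_zero_right] at hx
    by_cases hx0 : x = 0
    · subst hx0
      exact le_max_of_le_left (le_max_right _ _)
    · rcases lt_or_ge ‖x‖ ε' with hlt | hge
      · -- near origin
        have hxpow : (0:ℝ) < ‖x‖ ^ (2 * m) :=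
          pow_pos (norm_pos_iff.mpr hx0) _
        have h1 : M₁ * ‖x‖ ^ (2 * m) ≤ lhat x :=
          (hθ x (le_of_lt (lt_of_lt_of_le hlt (min_le_left _ _)))).1
        have h2 : ‖γ x‖ ≤ M * ‖x‖ ^ (2 * m) := by
          apply hMδ
          rw [dist_zero_right]
          calc ‖x‖ < δ / 2 := lt_of_lt_of_le hlt (min_le_right _ _)
            _ < δ := by linarith
        have hlpos : 0 < lhat x := hpos x hx0
        have hinv : (lhat x)⁻¹ ≤ (M₁ * ‖x‖ ^ (2 * m))⁻¹ :=
          inv_anti₀ (by positivity) h1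
        have : ‖f x‖ ≤ (M₁ * ‖x‖ ^ (2 * m))⁻¹ * (M * ‖x‖ ^ (2 * m)) := by
          rw [hnorm x hx0]
          exact mul_le_mul hinv h2 (norm_nonneg _) (by positivity)
        refine this.trans (le_max_of_le_left (le_max_of_le_left (le_of_eq ?_)))
        field_simp
      · -- annulus
        have hxA : x ∈ A := by
          constructor
          · simpa [Metric.mem_closedBall, dist_zero_right] using hx
          · simp only [Metric.mem_ball, dist_zero_right, not_lt]
            exact hge
        have : (lhat x)⁻¹ * ‖γ x‖ ∈ (fun x => (lhat x)⁻¹ * ‖γ x‖) '' A :=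
          ⟨x, hxA, rfl⟩
        rw [hnorm x hx0]
        exact le_max_of_le_right (hB₂ this)
  -- Integrable on complement
  have hcompl : IntegrableOn f (Metric.closedBall 0 r₁)ᶜ volume := by
    have hg : Integrable (fun x : EuclideanSpace ℝ (Fin d) => C * (‖x‖ ^ k * ‖γ x‖)) volume :=
      (γ.integrable_pow_mul volume k).const_mul C
    apply Integrable.mono' hg.integrableOn hmeas.restrict
    rw [ae_restrict_iff' measurableSet_closedBall.compl]
    apply ae_of_all
    intro x hx
    simp only [Set.mem_compl_iff, Metric.mem_closedBall, dist_zero_right, not_le] at hx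
    have hx0 : x ≠ 0 := by
      intro h; rw [h, norm_zero] at hx; linarith
    have hRx : R ≤ ‖x‖ := le_of_lt (lt_of_le_of_lt (le_max_left R 1) hx)
    rw [hnorm x hx0]
    calc (lhat x)⁻¹ * ‖γ x‖ ≤ (C * ‖x‖ ^ k) * ‖γ x‖ :=
          mul_le_mul_of_nonneg_right (hR x hRx) (norm_nonneg _)
      _ = C * (‖x‖ ^ k * ‖γ x‖) := by ring
  rw [← integrableOn_univ, ← Set.union_compl_self (Metric.closedBall (0:EuclideanSpace ℝ (Fin d)) r₁)]
  exact hball.union hcompl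
end
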